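/- arXiv:2303.05443 — 4 statements merged into one kernel-verified Lean document; each statement's English description precedes it below -/
import Mathlib

section
/- The skew-normal density integrates to one: for every real λ, the integral over ℝ of w ↦ 2·φ(w)·Φ(λ·w) equals 1, where φ(w) = (2π)^{-1/2}·exp(-w²/2) is the standard normal density and Φ(x) = ∫_{-∞}^{x} φ(u) du is the standard normal distribution function. -/
open MeasureTheory Real

/-- The standard normal density `φ(w) = (2π)^{-1/2} exp(-w²/2)`. -/
noncomputable def stdNormalPDF (w : ℝ) : ℝ := (2 * π) ^ (-(1 : ℝ) / 2) * Real.exp (-w ^ 2 / 2)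

/-- The standard normal distribution function `Φ(x) = ∫_{-∞}^x φ(u) du`. -/
noncomputable def stdNormalCDF (x : ℝ) : ℝ := ∫ u in Set.Iic x, stdNormalPDF u

lemma stdNormalPDF_nonneg (w : ℝ) : 0 ≤ stdNormalPDF w := by
  unfold stdNormalPDF
  positivity

lemma stdNormalPDF_even (w : ℝ) : stdNormalPDF (-w) = stdNormalPDF w := by
  simp [stdNormalPDF]

lemma integrable_stdNormalPDF : Integrable stdNormalPDF := by
  have h : Integrable (fun w : ℝ => Real.exp (-(1/2 : ℝ) * w ^ 2)) :=
    integrable_exp_neg_mul_sq (by norm_num)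
  have := h.const_mul ((2 * π) ^ (-(1 : ℝ) / 2))
  refine this.congr (Filter.Eventually.of_forall fun w => ?_)
  unfold stdNormalPDF
  ring_nf

lemma integral_stdNormalPDF : ∫ w : ℝ, stdNormalPDF w = 1 := by
  have h : ∫ w : ℝ, Real.exp (-(1/2 : ℝ) * w ^ 2) = √(π / (1/2)) :=
    integral_gaussian (1/2)
  have heq : ∫ w : ℝ, stdNormalPDF w
      = (2 * π) ^ (-(1 : ℝ) / 2) * ∫ w : ℝ, Real.exp (-(1/2 : ℝ) * w ^ 2) := by
    rw [← integral_const_mul]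
    congr 1 with w
    unfold stdNormalPDF
    ring_nf
  rw [heq, h]
  have hpi : (0:ℝ) < 2 * π := by positivity
  have : √(π / (1/2)) = √(2 * π) := by norm_num [mul_comm]
  rw [this, Real.sqrt_eq_rpow, ← Real.rpow_add hpi]
  norm_num

lemma measurable_stdNormalCDF : Measurable stdNormalCDF := by
  have hmono : Monotone stdNormalCDF := fun a b hab => by
    unfold stdNormalCDF
    exact setIntegral_mono_set integrable_stdNormalPDF.integrableOn
      (Filter.Eventually.of_forall stdNormalPDF_nonneg)
      (HasSubset.Subset.eventuallyLE (Set.Iic_subset_Iic.2 hab))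
  exact hmono.measurable

lemma stdNormalCDF_nonneg (x : ℝ) : 0 ≤ stdNormalCDF x :=
  setIntegral_nonneg measurableSet_Iic fun w _ => stdNormalPDF_nonneg w

lemma stdNormalCDF_le_one (x : ℝ) : stdNormalCDF x ≤ 1 := by
  rw [← integral_stdNormalPDF]
  exact setIntegral_le_integral integrable_stdNormalPDF
    (Filter.Eventually.of_forall stdNormalPDF_nonneg)

lemma stdNormalCDF_neg (x : ℝ) : stdNormalCDF (-x) = 1 - stdNormalCDF x := by
  have h1 : stdNormalCDF (-x) = ∫ u in Set.Ioi x, stdNormalPDF u := by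
    unfold stdNormalCDF
    rw [← neg_neg x, ← integral_comp_neg_Iic (-x) stdNormalPDF]
    simp only [neg_neg]
    exact setIntegral_congr_fun measurableSet_Iic fun u _ => (stdNormalPDF_even u).symm
  have h2 : stdNormalCDF x + ∫ u in Set.Ioi x, stdNormalPDF u = 1 := by
    rw [← integral_stdNormalPDF]
    unfold stdNormalCDF
    exact intervalIntegral.integral_Iic_add_Ioi integrable_stdNormalPDF.integrableOn
      integrable_stdNormalPDF.integrableOn
  rw [h1]; linarith

lemma integrable_mul_cdf (l : ℝ) :
    Integrable (fun w : ℝ => stdNormalPDF w * stdNormalCDF (l * w)) := by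
  have h : Integrable (fun w : ℝ => stdNormalCDF (l * w) * stdNormalPDF w) := by
    refine integrable_stdNormalPDF.bdd_mul (c := 1)
      ((measurable_stdNormalCDF.comp (measurable_const_mul l)).aestronglyMeasurable)
      (Filter.Eventually.of_forall fun w => ?_)
    rw [Real.norm_eq_abs, abs_of_nonneg (stdNormalCDF_nonneg _)]
    exact stdNormalCDF_le_one _
  exact h.congr (Filter.Eventually.of_forall fun w => mul_comm _ _)

/-- The skew-normal density integrates to one: for every real `l`,
`∫_ℝ 2·φ(w)·Φ(l·w) dw = 1`. -/
theorem skewNormal_density_integrates_to_one (l : ℝ) :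
    ∫ w : ℝ, 2 * stdNormalPDF w * stdNormalCDF (l * w) = 1 := by
  have hsym : ∫ w : ℝ, stdNormalPDF w * stdNormalCDF (l * w)
      = ∫ w : ℝ, stdNormalPDF w * (1 - stdNormalCDF (l * w)) := by
    rw [← integral_neg_eq_self (fun w : ℝ => stdNormalPDF w * stdNormalCDF (l * w))]
    congr 1 with w
    rw [stdNormalPDF_even, mul_neg, stdNormalCDF_neg]
  have hint : Integrable (fun w : ℝ => stdNormalPDF w * (1 - stdNormalCDF (l * w))) := by
    have := integrable_stdNormalPDF.sub (integrable_mul_cdf l)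
    refine this.congr (Filter.Eventually.of_forall fun w => ?_)
    simp only [Pi.sub_apply]
    ring
  have hadd : (∫ w : ℝ, stdNormalPDF w * stdNormalCDF (l * w))
      + ∫ w : ℝ, stdNormalPDF w * (1 - stdNormalCDF (l * w)) = 1 := by
    rw [← integral_add (integrable_mul_cdf l) hint]
    have heq : ∫ w : ℝ, (stdNormalPDF w * stdNormalCDF (l * w)
        + stdNormalPDF w * (1 - stdNormalCDF (l * w))) = ∫ w : ℝ, stdNormalPDF w := by
      congr 1 with w
      ring
    rw [heq, integral_stdNormalPDF]
  have h2 : ∫ w : ℝ, 2 * stdNormalPDF w * stdNormalCDF (l * w)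
      = 2 * ∫ w : ℝ, stdNormalPDF w * stdNormalCDF (l * w) := by
    rw [← integral_const_mul]
    congr 1 with w
    ring
  rw [h2]
  linarith [hsym, hadd]
end

section
/- Stochastic representation of the univariate skew-normal (Lemma 1, n = 1): let λ ∈ ℝ and δ = λ/√(1+λ²). If X₀ and X₁ are independent random variables, each with the standard normal distribution, then the random variable W = δ·|X₀| + √(1−δ²)·X₁ has law absolutely continuous with respect to Lebesgue measure, with density w ↦ 2·φ(w)·Φ(λ·w). -/
open MeasureTheory ProbabilityTheory Real

open Set
open scoped NNReal ENNReal

/-!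
Write `c = √(1 - δ²)` and `φ_c` for the `N(0, c²)` density. Given `X₀ = x`, the variable
`W = δ|X₀| + c X₁` is `N(δ|x|, c²)`, so the law of `W` is the Gaussian mixture with density
`w ↦ ∫ φ(x) φ_c(w - δ|x|) dx`. Because `δ² + c² = 1`, the integrand is the density of a standard
bivariate normal with correlation `δ`, hence symmetric: `φ(x) φ_c(w - δx) = φ(w) φ_c(x - δw)`.
Folding the integral onto `x > 0` gives `2 φ(w) ℙ(N(δw, c²) > 0) = 2 φ(w) Φ(δw / c)`, and
`δ / c = l`.
-/

lemma stdNormalPDF_eq_gaussianPDFReal : stdNormalPDF = gaussianPDFReal 0 1 := by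
  ext x
  rw [stdNormalPDF, gaussianPDFReal, neg_div, Real.rpow_neg (by positivity), ← Real.sqrt_eq_rpow]
  simp

lemma gaussianReal_zero_one_Iic (a : ℝ) :
    gaussianReal 0 1 (Iic a) = ENNReal.ofReal (stdNormalCDF a) := by
  rw [gaussianReal_apply_eq_integral 0 one_ne_zero, stdNormalCDF, stdNormalPDF_eq_gaussianPDFReal]

lemma gaussianPDF_zero_abs (v : ℝ≥0) (x : ℝ) : gaussianPDF 0 v |x| = gaussianPDF 0 v x := by
  simp [gaussianPDF, gaussianPDFReal]

@[fun_prop]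
lemma Measurable.gaussianPDF {α : Type*} [MeasurableSpace α] {m x : α → ℝ} (hm : Measurable m)
    (hx : Measurable x) (v : ℝ≥0) : Measurable (fun a => gaussianPDF (m a) v (x a)) :=
  measurable_uncurry_gaussianPDF.comp (hm.prodMk (measurable_const.prodMk hx))

lemma gaussianReal_map_const_add_mul (μ : ℝ) (v : ℝ≥0) (m c : ℝ) :
    (gaussianReal μ v).map (fun y => m + c * y) =
      gaussianReal (c * μ + m) (.mk (c ^ 2) (sq_nonneg _) * v) := by
  rw [← gaussianReal_map_const_add, ← gaussianReal_map_const_mul,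
    Measure.map_map (measurable_const_add m) (measurable_const_mul c)]
  rfl

lemma gaussianReal_Ioi_zero (m : ℝ) {c : ℝ} (hc : 0 < c) :
    gaussianReal m (.mk (c ^ 2) (sq_nonneg _)) (Ioi 0) = ENNReal.ofReal (stdNormalCDF (m / c)) := by
  have h_map : gaussianReal m (.mk (c ^ 2) (sq_nonneg _)) =
      (gaussianReal 0 1).map (fun y => m + -c * y) := by
    rw [gaussianReal_map_const_add_mul]
    congr 1
    · ring
    · ext; simp
  have h_preimage : (fun y => m + -c * y) ⁻¹' Ioi 0 = Iio (m / c) := by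
    ext y
    simp [lt_div_iff₀ hc, mul_comm]
  have := nullSingletonClass_gaussianReal (μ := 0) one_ne_zero
  rw [h_map, Measure.map_apply (by fun_prop) measurableSet_Ioi, h_preimage,
    measure_congr Iio_ae_eq_Iic, gaussianReal_zero_one_Iic]

lemma lintegral_comp_abs (f : ℝ → ℝ≥0∞) : ∫⁻ x, f |x| = 2 * ∫⁻ x in Ioi 0, f x := by
  have h_pos : ∫⁻ x in Ioi 0, f |x| = ∫⁻ x in Ioi 0, f x :=
    setLIntegral_congr_fun measurableSet_Ioi fun x hx => by rw [abs_of_pos hx]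
  have h_neg : ∫⁻ x in Iic 0, f |x| = ∫⁻ x in Ioi 0, f x := calc
    ∫⁻ x in Iic 0, f |x| = ∫⁻ x in Iio 0, f (-x) := by
      rw [setLIntegral_congr Iio_ae_eq_Iic.symm]
      exact setLIntegral_congr_fun measurableSet_Iio fun x hx => by rw [abs_of_neg hx]
    _ = ∫⁻ x in Ioi 0, f x := by
      simpa using (Measure.measurePreserving_neg volume).setLIntegral_comp_preimage_emb
        (Homeomorph.neg ℝ).measurableEmbedding f (Ioi 0)
  rw [← lintegral_add_compl _ measurableSet_Ioi, compl_Ioi, h_pos, h_neg, two_mul]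

lemma conv_gaussianReal_eq_withDensity (μ : Measure ℝ) [SFinite μ] {v : ℝ≥0} (hv : v ≠ 0) :
    μ ∗ gaussianReal 0 v = volume.withDensity (fun w => ∫⁻ x, gaussianPDF x v w ∂μ) := by
  ext s hs
  have h_slice (x : ℝ) :
      ∫⁻ y, s.indicator 1 (x + y) ∂gaussianReal 0 v = ∫⁻ w in s, gaussianPDF x v w := by
    rw [← lintegral_map (measurable_one.indicator hs) (measurable_const_add x),
      gaussianReal_map_const_add, zero_add, lintegral_indicator_one hs, gaussianReal_apply _ hv]
  rw [withDensity_apply _ hs, ← lintegral_indicator_one hs,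
    Measure.lintegral_conv (measurable_one.indicator hs)]
  simp_rw [h_slice]
  exact lintegral_lintegral_swap (by fun_prop)

lemma gaussianPDF_mul_gaussianPDF_comm {δ : ℝ} {v : ℝ≥0} (hv : δ ^ 2 + v = 1) (x w : ℝ) :
    gaussianPDF 0 1 x * gaussianPDF (δ * x) v w = gaussianPDF 0 1 w * gaussianPDF (δ * w) v x := by
  rcases eq_or_ne v 0 with rfl | hv0
  · simp
  simp only [gaussianPDF, ← ENNReal.ofReal_mul (gaussianPDFReal_nonneg _ _ _)]
  congr 1
  simp only [gaussianPDFReal, mul_mul_mul_comm _ (rexp _), ← exp_add]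
  congr 2
  have : (v : ℝ) ≠ 0 := by exact_mod_cast hv0
  field_simp
  simp only [NNReal.coe_one]
  linear_combination (w ^ 2 - x ^ 2) * hv

lemma lintegral_gaussianReal_gaussianPDF_abs {l c : ℝ} (hc : 0 < c)
    (h : (l * c) ^ 2 + c ^ 2 = 1) (w : ℝ) :
    ∫⁻ x, gaussianPDF (l * c * |x|) (.mk (c ^ 2) (sq_nonneg _)) w ∂gaussianReal 0 1 =
      ENNReal.ofReal (2 * stdNormalPDF w * stdNormalCDF (l * w)) := by
  set v : ℝ≥0 := .mk (c ^ 2) (sq_nonneg _)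
  have hv : v ≠ 0 := by simp [v, ← NNReal.coe_ne_zero, hc.ne']
  calc ∫⁻ x, gaussianPDF (l * c * |x|) v w ∂gaussianReal 0 1
      = ∫⁻ x, gaussianPDF 0 1 x * gaussianPDF (l * c * |x|) v w := by
        rw [gaussianReal_of_var_ne_zero _ one_ne_zero,
          lintegral_withDensity_eq_lintegral_mul _ (measurable_gaussianPDF _ _) (by fun_prop)]
        rfl
    _ = ∫⁻ x, gaussianPDF 0 1 w * gaussianPDF (l * c * w) v |x| := by
        congr 1 with x
        rw [← gaussianPDF_zero_abs 1 x, gaussianPDF_mul_gaussianPDF_comm h]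
    _ = 2 * gaussianPDF 0 1 w * gaussianReal (l * c * w) v (Ioi 0) := by
        rw [lintegral_comp_abs (fun t => gaussianPDF 0 1 w * gaussianPDF (l * c * w) v t),
          lintegral_const_mul _ (measurable_gaussianPDF _ _), gaussianReal_apply _ hv]
        ring
    _ = ENNReal.ofReal (2 * stdNormalPDF w * stdNormalCDF (l * w)) := by
        rw [gaussianReal_Ioi_zero _ hc, show l * c * w / c = l * w by field_simp, gaussianPDF,
          stdNormalPDF_eq_gaussianPDFReal,
          ENNReal.ofReal_mul (mul_nonneg zero_le_two (gaussianPDFReal_nonneg _ _ _)),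
          ENNReal.ofReal_mul zero_le_two, ENNReal.ofReal_ofNat]

lemma mul_inv_sqrt_one_add_sq_sq_add_sq (l : ℝ) :
    (l * (√(1 + l ^ 2))⁻¹) ^ 2 + ((√(1 + l ^ 2))⁻¹) ^ 2 = 1 := by
  have h : 0 < 1 + l ^ 2 := by positivity
  rw [mul_pow, inv_pow, sq_sqrt h.le]
  field_simp
  ring

/-- Stochastic representation of the univariate skew-normal (Lemma 1, n = 1):
if `δ = l/√(1+l²)` and `X₀, X₁` are independent standard normal random variables, then
`W = δ·|X₀| + √(1−δ²)·X₁` has density `w ↦ 2·φ(w)·Φ(l·w)` with respect to Lebesgue measure. -/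
theorem skewNormal_stochastic_representation
    {Ω : Type*} [MeasurableSpace Ω] (P : Measure Ω) [IsProbabilityMeasure P]
    (l δ : ℝ) (hδ : δ = l / Real.sqrt (1 + l ^ 2))
    (X₀ X₁ : Ω → ℝ) (hX₀ : Measurable X₀) (hX₁ : Measurable X₁)
    (hindep : IndepFun X₀ X₁ P)
    (hlaw₀ : Measure.map X₀ P = gaussianReal 0 1)
    (hlaw₁ : Measure.map X₁ P = gaussianReal 0 1) :
    Measure.map (fun ω => δ * |X₀ ω| + Real.sqrt (1 - δ ^ 2) * X₁ ω) P =
      volume.withDensity (fun w => ENNReal.ofReal (2 * stdNormalPDF w * stdNormalCDF (l * w))) := by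
  have hlc := mul_inv_sqrt_one_add_sq_sq_add_sq l
  rw [hδ, div_eq_mul_inv]
  set c := (√(1 + l ^ 2))⁻¹
  have hc : 0 < c := by positivity
  have hsqrt : √(1 - (l * c) ^ 2) = c := by rw [← hlc, add_sub_cancel_left, sqrt_sq hc.le]
  rw [hsqrt]
  have h_law₀ :
      P.map (fun ω => l * c * |X₀ ω|) = (gaussianReal 0 1).map (fun x => l * c * |x|) := by
    rw [← hlaw₀, Measure.map_map (by fun_prop) hX₀]
    rfl
  have h_law₁ : P.map (fun ω => c * X₁ ω) = gaussianReal 0 (.mk (c ^ 2) (sq_nonneg _)) := by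
    simpa using (gaussianReal_const_mul ⟨hX₁.aemeasurable, hlaw₁⟩ c).map_eq
  have hv : (.mk (c ^ 2) (sq_nonneg _) : ℝ≥0) ≠ 0 := by simp [← NNReal.coe_ne_zero, hc.ne']
  calc P.map (fun ω => l * c * |X₀ ω| + c * X₁ ω)
      = P.map (fun ω => l * c * |X₀ ω|) ∗ P.map (fun ω => c * X₁ ω) :=
        (hindep.comp (φ := fun x => l * c * |x|) (ψ := (c * ·)) (by fun_prop) (by fun_prop)
          ).map_add_eq_map_conv_map (by fun_prop) (by fun_prop)
    _ = volume.withDensity (fun w =>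
          ∫⁻ x, gaussianPDF (l * c * |x|) (.mk (c ^ 2) (sq_nonneg _)) w ∂gaussianReal 0 1) := by
        rw [h_law₁, conv_gaussianReal_eq_withDensity _ hv, h_law₀]
        congr 1 with w
        exact lintegral_map (by fun_prop) (by fun_prop)
    _ = _ := by
        congr 1 with w
        exact lintegral_gaussianReal_gaussianPDF_abs hc hlc w
end

section
/- Marginal density formula (Lemma 2, univariate case, as an integral identity): let ψ > 0 and d, μ, y ∈ ℝ. Set η = d·(y−μ)/(ψ+d²) and ζ = √(ψ/(ψ+d²)). Then ∫₀^∞ 2·φ(y; μ+d·t, ψ)·φ(t; 0, 1) dt = 2·φ(y; μ, ψ+d²)·Φ(η/ζ). -/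
open MeasureTheory Real

/-- The normal density with mean `m` and variance `s2 > 0`:
`φ(x; m, s²) = (2πs²)^{-1/2} exp(-(x−m)²/(2s²))`. -/
noncomputable def normalPDF (m s2 x : ℝ) : ℝ :=
  (2 * π * s2) ^ (-(1 : ℝ) / 2) * Real.exp (-(x - m) ^ 2 / (2 * s2))

lemma my_integral_Iic_comp_add_right (f : ℝ → ℝ) (c a : ℝ) :
    (∫ x in Set.Iic c, f (x + a)) = ∫ x in Set.Iic (c + a), f x := by
  have A : MeasurableEmbedding fun x : ℝ => x + a :=
    (Homeomorph.addRight a).isClosedEmbedding.measurableEmbedding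
  have h := A.setIntegral_map (μ := volume) f (Set.Iic (c + a))
  rw [map_add_right_eq_self (volume : Measure ℝ) a] at h
  rw [h, Set.preimage_add_const_Iic, add_sub_cancel_right]

/-- Marginal density formula (Lemma 2, univariate case, as an integral identity):
for `ψ > 0`, with `η = d·(y−μ)/(ψ+d²)` and `ζ = √(ψ/(ψ+d²))`,
`∫₀^∞ 2·φ(y; μ+d·t, ψ)·φ(t; 0, 1) dt = 2·φ(y; μ, ψ+d²)·Φ(η/ζ)`. -/
theorem skewNormal_marginal_density (ψ d μ y : ℝ) (hψ : 0 < ψ)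
    (η ζ : ℝ) (hη : η = d * (y - μ) / (ψ + d ^ 2)) (hζ : ζ = Real.sqrt (ψ / (ψ + d ^ 2))) :
    ∫ t in Set.Ioi (0 : ℝ), 2 * normalPDF (μ + d * t) ψ y * normalPDF 0 1 t =
      2 * normalPDF μ (ψ + d ^ 2) y * stdNormalCDF (η / ζ) := by
  have hA0 : (0 : ℝ) < ψ + d ^ 2 := by positivity
  have hζ0 : 0 < ζ := by
    rw [hζ]; exact Real.sqrt_pos.mpr (by positivity)
  have hζsq : ζ ^ 2 = ψ / (ψ + d ^ 2) := by
    rw [hζ]; exact Real.sq_sqrt (by positivity)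
  have hπ : (0 : ℝ) < 2 * π := by positivity
  -- constant identity
  have hc : (2 * π * ψ) ^ (-(1 : ℝ) / 2) = (2 * π * (ψ + d ^ 2)) ^ (-(1 : ℝ) / 2) * ζ⁻¹ := by
    have hζ' : ζ⁻¹ = (ψ / (ψ + d ^ 2)) ^ (-(1 : ℝ) / 2) := by
      rw [hζ, Real.sqrt_eq_rpow, show (-(1:ℝ)/2) = -(1/2) by norm_num,
        Real.rpow_neg (by positivity)]
    rw [hζ', ← Real.mul_rpow (by positivity) (by positivity)]
    congr 1
    field_simp
  -- exponent identity
  have he : ∀ t : ℝ, -(y - (μ + d * t)) ^ 2 / (2 * ψ) + -(t - 0) ^ 2 / (2 * 1)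
      = -(y - μ) ^ 2 / (2 * (ψ + d ^ 2)) + -((t - η) / ζ) ^ 2 / 2 := by
    intro t
    have h1 : ((t - η) / ζ) ^ 2 = (t - η) ^ 2 / (ψ / (ψ + d ^ 2)) := by
      rw [div_pow, hζsq]
    rw [h1, hη]
    field_simp
    ring
  have key : ∀ t : ℝ, 2 * normalPDF (μ + d * t) ψ y * normalPDF 0 1 t
      = 2 * normalPDF μ (ψ + d ^ 2) y * (ζ⁻¹ * stdNormalPDF ((t - η) / ζ)) := by
    intro t
    unfold normalPDF stdNormalPDF
    have expand : ∀ (c1 c2 a b : ℝ),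
        2 * (c1 * Real.exp a) * (c2 * Real.exp b) = 2 * (c1 * c2) * Real.exp (a + b) := by
      intros c1 c2 a b; rw [Real.exp_add]; ring
    rw [expand]
    have : 2 * ((2 * π * (ψ + d ^ 2)) ^ (-(1 : ℝ) / 2) *
          Real.exp (-(y - μ) ^ 2 / (2 * (ψ + d ^ 2)))) *
        (ζ⁻¹ * ((2 * π) ^ (-(1 : ℝ) / 2) * Real.exp (-((t - η) / ζ) ^ 2 / 2)))
        = 2 * ((2 * π * (ψ + d ^ 2)) ^ (-(1 : ℝ) / 2) * ζ⁻¹ * (2 * π) ^ (-(1 : ℝ) / 2)) *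
          Real.exp (-(y - μ) ^ 2 / (2 * (ψ + d ^ 2)) + -((t - η) / ζ) ^ 2 / 2) := by
      rw [Real.exp_add]; ring
    rw [this, he t, hc, show (2 * π * 1 : ℝ) = 2 * π by ring]
  calc ∫ t in Set.Ioi (0 : ℝ), 2 * normalPDF (μ + d * t) ψ y * normalPDF 0 1 t
      = ∫ t in Set.Ioi (0 : ℝ),
          2 * normalPDF μ (ψ + d ^ 2) y * (ζ⁻¹ * stdNormalPDF ((t - η) / ζ)) :=
        setIntegral_congr_fun measurableSet_Ioi (fun t _ => key t)
    _ = 2 * normalPDF μ (ψ + d ^ 2) y * ζ⁻¹ *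
          ∫ t in Set.Ioi (0 : ℝ), stdNormalPDF ((t - η) / ζ) := by
        simp_rw [← mul_assoc]
        rw [integral_const_mul]
    _ = 2 * normalPDF μ (ψ + d ^ 2) y * ζ⁻¹ *
          ∫ t in Set.Ioi (0 : ℝ), (fun x => stdNormalPDF (η / ζ - x)) (ζ⁻¹ * t) := by
        congr 1
        refine setIntegral_congr_fun measurableSet_Ioi (fun t _ => ?_)
        have hsq : ((t - η) / ζ) ^ 2 = (η / ζ - ζ⁻¹ * t) ^ 2 := by
          field_simp; ring
        simp only [stdNormalPDF, hsq]
    _ = 2 * normalPDF μ (ψ + d ^ 2) y * ζ⁻¹ *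
          ((ζ⁻¹)⁻¹ • ∫ x in Set.Ioi (ζ⁻¹ * 0), stdNormalPDF (η / ζ - x)) := by
        rw [integral_comp_mul_left_Ioi (fun x => stdNormalPDF (η / ζ - x)) 0
          (inv_pos.mpr hζ0)]
    _ = 2 * normalPDF μ (ψ + d ^ 2) y * stdNormalCDF (η / ζ) := by
        rw [inv_inv, mul_zero]
        have h1 : (∫ x in Set.Ioi (0 : ℝ), stdNormalPDF (η / ζ - x))
            = ∫ x in Set.Iic (-(0 : ℝ)), stdNormalPDF (η / ζ + x) := by
          rw [← integral_comp_neg_Ioi]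
          refine setIntegral_congr_fun measurableSet_Ioi (fun t _ => ?_)
          rw [← sub_eq_add_neg]
        rw [h1, neg_zero]
        have h2 : (∫ x in Set.Iic (0 : ℝ), stdNormalPDF (η / ζ + x))
            = ∫ x in Set.Iic (0 + η / ζ), stdNormalPDF x := by
          rw [← my_integral_Iic_comp_add_right]
          simp_rw [add_comm]
        rw [h2, zero_add]
        have : stdNormalCDF (η / ζ) = ∫ x in Set.Iic (η / ζ), stdNormalPDF x := rfl
        rw [this, smul_eq_mul]
        field_simp
end

section
/- Lemma 2 (probabilistic form, univariate): let ψ > 0 and d, μ ∈ ℝ. Let T be a random variable with the standard half-normal distribution (density t ↦ 2·φ(t;0,1) on t > 0 and 0 otherwise), independent of a random variable R with the normal N(0, ψ) distribution. Then Y = μ + d·T + R has density y ↦ 2·φ(y; μ, ψ+d²)·Φ( d·(y−μ) / √(ψ·(ψ+d²)) ) with respect to Lebesgue measure. -/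
/-! By independence, the law of `Y` is the convolution of the law of `μ + d·T` with `N(0, ψ)`,
so `Y` has density `y ↦ ∫_{t > 0} 2 φ(t; 0, 1) φ(y; μ + d t, ψ) dt`. Completing the square in `t`
factors the integrand as `φ(y; μ, ψ + d²)` times the normal density in `t` with mean
`d (y − μ) / (ψ + d²)` and variance `ψ / (ψ + d²)`, whose mass on `(0, ∞)` is `Φ` of its mean
over its standard deviation. -/

open MeasureTheory ProbabilityTheory Real

open Set
open scoped ENNReal

lemma conv_withDensity_eq_withDensity_lintegral {G : Type*} [AddGroup G]
    {mG : MeasurableSpace G} [MeasurableAdd₂ G] [MeasurableNeg G]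
    {μ : Measure G} [SFinite μ] [μ.IsAddLeftInvariant]
    (ν : Measure G) [SFinite ν] {g : G → ℝ≥0∞} (hg : Measurable g) :
    ν ∗ μ.withDensity g = μ.withDensity (fun y ↦ ∫⁻ x, g (-x + y) ∂ν) := by
  refine Measure.ext_of_lintegral _ fun φ hφ ↦ ?_
  have hconv : Measurable fun y ↦ ∫⁻ x, g (-x + y) ∂ν :=
    (hg.comp (by fun_prop : Measurable fun p : G × G ↦ -p.1 + p.2)).lintegral_prod_left'
  calc ∫⁻ z, φ z ∂(ν ∗ μ.withDensity g)
      = ∫⁻ x, ∫⁻ z, g z * φ (x + z) ∂μ ∂ν := by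
        rw [Measure.lintegral_conv hφ]
        exact lintegral_congr fun x ↦ lintegral_withDensity_eq_lintegral_mul _ hg (by fun_prop)
    _ = ∫⁻ x, ∫⁻ y, g (-x + y) * φ y ∂μ ∂ν := by
        refine lintegral_congr fun x ↦ ?_
        rw [← lintegral_add_left_eq_self _ (-x)]
        simp
    _ = ∫⁻ y, (∫⁻ x, g (-x + y) ∂ν) * φ y ∂μ := by
        rw [lintegral_lintegral_swap (by fun_prop)]
        exact lintegral_congr fun y ↦ lintegral_mul_const _ (hg.comp (by fun_prop))
    _ = ∫⁻ y, φ y ∂μ.withDensity (fun y ↦ ∫⁻ x, g (-x + y) ∂ν) :=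
        (lintegral_withDensity_eq_lintegral_mul _ hconv hφ).symm

lemma normalPDF_eq_gaussianPDFReal (m : ℝ) {s2 : ℝ} (hs : 0 ≤ s2) :
    normalPDF m s2 = gaussianPDFReal m s2.toNNReal := by
  ext x
  rw [normalPDF, gaussianPDFReal, Real.coe_toNNReal _ hs, neg_div, rpow_neg (by positivity),
    sqrt_eq_rpow]

lemma measurable_normalPDF (m s2 : ℝ) : Measurable (normalPDF m s2) := by
  unfold normalPDF
  fun_prop

lemma normalPDF_nonneg (m : ℝ) {s2 : ℝ} (hs : 0 ≤ s2) (x : ℝ) : 0 ≤ normalPDF m s2 x := by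
  rw [normalPDF_eq_gaussianPDFReal m hs]
  exact gaussianPDFReal_nonneg _ _ _

lemma normalPDF_zero_neg_add (m s2 x : ℝ) : normalPDF 0 s2 (-m + x) = normalPDF m s2 x := by
  simp [normalPDF, neg_add_eq_sub]

lemma normalPDF_eq_stdNormalPDF (m : ℝ) {s2 : ℝ} (hs : 0 < s2) (x : ℝ) :
    normalPDF m s2 x = (√s2)⁻¹ * stdNormalPDF ((m - x) / √s2) := by
  rw [normalPDF, stdNormalPDF, mul_rpow (by positivity) hs.le, neg_div, rpow_neg hs.le,
    ← sqrt_eq_rpow, div_pow, sq_sqrt hs.le, mul_left_comm, ← mul_assoc]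
  congr 2
  field_simp
  ring

lemma normalPDF_mul_normalPDF_add_mul (ψ d m t y : ℝ) (hψ : 0 < ψ) :
    normalPDF 0 1 t * normalPDF (m + d * t) ψ y
      = normalPDF m (ψ + d ^ 2) y * normalPDF (d * (y - m) / (ψ + d ^ 2)) (ψ / (ψ + d ^ 2)) t := by
  have hs : 0 < ψ + d ^ 2 := by positivity
  simp only [normalPDF]
  rw [mul_mul_mul_comm, mul_mul_mul_comm ((2 * π * (ψ + d ^ 2)) ^ _), ← exp_add, ← exp_add,
    ← mul_rpow (by positivity) (by positivity), ← mul_rpow (by positivity) (by positivity)]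
  congr 2
  · field_simp
  · field_simp
    ring

lemma integral_Ioi_stdNormalPDF_sub (c : ℝ) :
    ∫ u in Ioi 0, stdNormalPDF (c - u) = stdNormalCDF c := by
  rw [stdNormalCDF, ← integral_Ici_eq_integral_Ioi,
    ← (Measure.measurePreserving_sub_left volume c).setIntegral_preimage_emb
      (MeasurableEquiv.subLeft c).measurableEmbedding]
  simp

lemma integral_Ioi_normalPDF (m : ℝ) {s2 : ℝ} (hs : 0 < s2) :
    ∫ t in Ioi 0, normalPDF m s2 t = stdNormalCDF (m / √s2) := by
  have hs' : 0 < (√s2)⁻¹ := inv_pos.mpr (sqrt_pos.mpr hs)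
  have hscale : ∀ t, normalPDF m s2 t = (√s2)⁻¹ * stdNormalPDF (m / √s2 - (√s2)⁻¹ * t) := by
    intro t
    rw [normalPDF_eq_stdNormalPDF m hs, sub_div, div_eq_inv_mul t]
  simp_rw [hscale]
  rw [integral_const_mul, integral_comp_mul_left_Ioi (fun u ↦ stdNormalPDF (m / √s2 - u)) 0 hs',
    mul_zero, integral_Ioi_stdNormalPDF_sub, smul_eq_mul, ← mul_assoc, mul_inv_cancel₀ hs'.ne',
    one_mul]

lemma lintegral_halfNormalPDF_mul_normalPDF (d m y : ℝ) {ψ : ℝ} (hψ : 0 < ψ) :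
    ∫⁻ t, ENNReal.ofReal (if 0 < t then 2 * normalPDF 0 1 t else 0) *
        ENNReal.ofReal (normalPDF (m + d * t) ψ y)
      = ENNReal.ofReal (2 * normalPDF m (ψ + d ^ 2) y *
          stdNormalCDF (d * (y - m) / √(ψ * (ψ + d ^ 2)))) := by
  have hs : 0 < ψ + d ^ 2 := by positivity
  have hv : 0 < ψ / (ψ + d ^ 2) := by positivity
  set K := 2 * normalPDF m (ψ + d ^ 2) y
  set f := fun t ↦ K * normalPDF (d * (y - m) / (ψ + d ^ 2)) (ψ / (ψ + d ^ 2)) t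
  have hf_nonneg : 0 ≤ f := fun t ↦
    mul_nonneg (mul_nonneg zero_le_two (normalPDF_nonneg _ hs.le _)) (normalPDF_nonneg _ hv.le _)
  have hf_int : Integrable f := by
    simpa only [f, normalPDF_eq_gaussianPDFReal _ hv.le] using
      (integrable_gaussianPDFReal _ _).const_mul K
  have hintegrand : ∀ t, ENNReal.ofReal (if 0 < t then 2 * normalPDF 0 1 t else 0) *
      ENNReal.ofReal (normalPDF (m + d * t) ψ y)
        = (Ioi 0).indicator (fun t ↦ ENNReal.ofReal (f t)) t := by
    intro t
    split_ifs with ht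
    · rw [indicator_of_mem (mem_Ioi.mpr ht),
        ← ENNReal.ofReal_mul (mul_nonneg zero_le_two (normalPDF_nonneg _ zero_le_one _)), mul_assoc,
        normalPDF_mul_normalPDF_add_mul ψ d m t y hψ, ← mul_assoc]
    · rw [indicator_of_notMem (notMem_Ioi.mpr (not_lt.mp ht)), ENNReal.ofReal_zero, zero_mul]
  have hCDF_arg : d * (y - m) / (ψ + d ^ 2) / √(ψ / (ψ + d ^ 2))
      = d * (y - m) / √(ψ * (ψ + d ^ 2)) := by
    rw [sqrt_div hψ.le, sqrt_mul hψ.le]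
    field_simp
    rw [sq_sqrt hs.le]
  rw [lintegral_congr hintegrand, lintegral_indicator measurableSet_Ioi,
    ← ofReal_integral_eq_lintegral_ofReal hf_int.integrableOn (ae_of_all _ hf_nonneg),
    integral_const_mul, integral_Ioi_normalPDF _ hv, hCDF_arg]

/-- Lemma 2 (probabilistic form, univariate): for `ψ > 0`, if `T` is standard half-normal,
independent of `R ~ N(0, ψ)`, then `Y = μ + d·T + R` has density
`y ↦ 2·φ(y; μ, ψ+d²)·Φ(d·(y−μ)/√(ψ·(ψ+d²)))` with respect to Lebesgue measure. -/
theorem skewNormal_marginal_law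
    {Ω : Type*} [MeasurableSpace Ω] (P : Measure Ω) [IsProbabilityMeasure P]
    (ψ d μ : ℝ) (hψ : 0 < ψ)
    (T R : Ω → ℝ) (hT : Measurable T) (hR : Measurable R)
    (hindep : IndepFun T R P)
    (hlawT : Measure.map T P =
      volume.withDensity (fun t => ENNReal.ofReal (if 0 < t then 2 * normalPDF 0 1 t else 0)))
    (hlawR : Measure.map R P =
      volume.withDensity (fun r => ENNReal.ofReal (normalPDF 0 ψ r))) :
    Measure.map (fun ω => μ + d * T ω + R ω) P =
      volume.withDensity (fun y =>
        ENNReal.ofReal (2 * normalPDF μ (ψ + d ^ 2) y *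
          stdNormalCDF (d * (y - μ) / Real.sqrt (ψ * (ψ + d ^ 2))))) := by
  have hshift : Measurable fun t : ℝ ↦ μ + d * t := by fun_prop
  have hfT : Measurable fun t : ℝ ↦ ENNReal.ofReal (if 0 < t then 2 * normalPDF 0 1 t else 0) :=
    (Measurable.ite measurableSet_Ioi ((measurable_normalPDF 0 1).const_mul 2)
      measurable_const).ennreal_ofReal
  have hfR : Measurable fun r ↦ ENNReal.ofReal (normalPDF 0 ψ r) :=
    (measurable_normalPDF 0 ψ).ennreal_ofReal
  have hY : (fun ω ↦ μ + d * T ω + R ω) = (fun t ↦ μ + d * t) ∘ T + R := rfl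
  rw [hY, (hindep.comp hshift measurable_id).map_add_eq_map_conv_map (hshift.comp hT) hR,
    ← Measure.map_map hshift hT, hlawR, conv_withDensity_eq_withDensity_lintegral _ hfR]
  congr 1
  ext y
  simp only [normalPDF_zero_neg_add]
  have hmean : Measurable fun m ↦ ENNReal.ofReal (normalPDF m ψ y) := by
    unfold normalPDF
    fun_prop
  rw [lintegral_map hmean hshift, hlawT, lintegral_withDensity_eq_lintegral_mul _ hfT
    (g := fun t ↦ ENNReal.ofReal (normalPDF (μ + d * t) ψ y)) (hmean.comp hshift)]
  exact lintegral_halfNormalPDF_mul_normalPDF d μ y hψ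
end
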